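/- Under the setup of gradient descent on a linearized model with residual recursion r_{t+1} = (I − ηΘ) r_t, Θ symmetric positive definite, and 0 < η < 1/λ_max(Θ), for every t ≥ 0 we have ‖θ_t − θ₀‖ ≤ ‖θ_∞ − θ₀‖ = √(r₀ᵀ Θ⁻¹ r₀), where θ_t − θ₀ = η Jᵀ Σ_{k=0}^{t−1} (I − ηΘ)^k r₀ and Θ = J Jᵀ. -/
import Mathlib


open Matrix Filter

/-- With `θ_t − θ₀ = η Jᵀ Σ_{k<t} (I − ηΘ)^k r₀`, `Θ = JJᵀ` symmetric positive definite and
`0 < η < 1/λ_max(Θ)`, for every `t` we have `‖θ_t − θ₀‖ ≤ ‖θ_∞ − θ₀‖ = √(r₀ᵀ Θ⁻¹ r₀)`. -/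
theorem stmt_5 {n p : ℕ} [NeZero n] (J : Matrix (Fin n) (Fin p) ℝ)
    (Θ : Matrix (Fin n) (Fin n) ℝ) (hΘdef : Θ = J * Jᵀ) (hΘ : Θ.PosDef)
    (η : ℝ) (hη : 0 < η) (hη' : η < 1 / ⨆ i, hΘ.1.eigenvalues i)
    (r₀ : Fin n → ℝ) (d : ℕ → (Fin p → ℝ))
    (hd : ∀ t, d t = η • Jᵀ.mulVec ((∑ k ∈ Finset.range t, (1 - η • Θ) ^ k).mulVec r₀)) :
    (∀ t, Real.sqrt (d t ⬝ᵥ d t) ≤ Real.sqrt (r₀ ⬝ᵥ Θ⁻¹.mulVec r₀)) ∧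
      Tendsto (fun t => Real.sqrt (d t ⬝ᵥ d t)) atTop
        (nhds (Real.sqrt (r₀ ⬝ᵥ Θ⁻¹.mulVec r₀))) := by
  classical
  set lam := hΘ.1.eigenvalues with hlamdef
  set U : Matrix (Fin n) (Fin n) ℝ := (hΘ.1.eigenvectorUnitary : Matrix (Fin n) (Fin n) ℝ) with hUdef
  have hU1 : U * star U = 1 := Unitary.mul_star_self_of_mem hΘ.1.eigenvectorUnitary.2
  have hU2 : star U * U = 1 := Unitary.star_mul_self_of_mem hΘ.1.eigenvectorUnitary.2
  set cj : (Fin n → ℝ) → Matrix (Fin n) (Fin n) ℝ := fun f => U * diagonal f * star U with hcj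
  have cj_mul : ∀ f g, cj f * cj g = cj (f * g) := by
    intro f g
    show U * diagonal f * star U * (U * diagonal g * star U) = U * diagonal (fun i => f i * g i) * star U
    simp only [mul_assoc]
    rw [← mul_assoc (star U) U, hU2, one_mul, ← mul_assoc (diagonal f), diagonal_mul_diagonal]
  have cj_one : cj 1 = 1 := by
    show U * diagonal (fun _ => 1) * star U = 1
    rw [diagonal_one, mul_one, hU1]
  have cj_add : ∀ f g, cj f + cj g = cj (f + g) := by
    intro f g
    show _ = U * diagonal (fun i => f i + g i) * star U
    rw [← diagonal_add, mul_add, add_mul]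
  have cj_smul : ∀ (a : ℝ) f, a • cj f = cj (a • f) := by
    intro a f
    show a • (U * diagonal f * star U) = U * diagonal (a • f) * star U
    rw [diagonal_smul, mul_smul_comm, smul_mul_assoc]
  have cj_sub : ∀ f g, cj f - cj g = cj (f - g) := by
    intro f g
    show _ = U * diagonal (fun i => f i - g i) * star U
    rw [← diagonal_sub, mul_sub, sub_mul]
  have cj_pow : ∀ f (k : ℕ), cj f ^ k = cj (f ^ k) := by
    intro f k
    induction k with
    | zero => simpa using cj_one.symm
    | succ k ih => rw [pow_succ, ih, cj_mul, ← pow_succ]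
  have cj_sum : ∀ (t : ℕ) (f : ℕ → Fin n → ℝ),
      (∑ k ∈ Finset.range t, cj (f k)) = cj (∑ k ∈ Finset.range t, f k) := by
    intro t f
    induction t with
    | zero =>
      show 0 = U * diagonal (fun _ => 0) * star U
      rw [diagonal_zero, mul_zero, zero_mul]
    | succ t ih => rw [Finset.sum_range_succ, Finset.sum_range_succ, ih, cj_add]
  have hΘspec : Θ = cj lam := by
    have := hΘ.1.spectral_theorem
    simpa [hcj] using this
  set c : Fin n → ℝ := (star U) *ᵥ r₀ with hcdef
  have hstarU : star U = Uᵀ := by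
    rw [Matrix.star_eq_conjTranspose, conjTranspose_eq_transpose_of_trivial]
  have quad : ∀ f, r₀ ⬝ᵥ (cj f) *ᵥ r₀ = ∑ i, f i * c i ^ 2 := by
    intro f
    simp only [hcj]
    rw [← mulVec_mulVec, ← mulVec_mulVec, dotProduct_mulVec, ← mulVec_transpose, ← hstarU,
      ← hcdef]
    simp only [dotProduct, mulVec_diagonal]
    exact Finset.sum_congr rfl fun i _ => by ring

  have hlam_pos : ∀ i, 0 < lam i := fun i => hΘ.eigenvalues_pos i
  have hsup_pos : 0 < ⨆ i, lam i := by
    have i0 : Fin n := ⟨0, Nat.pos_of_ne_zero (NeZero.ne n)⟩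
    exact lt_of_lt_of_le (hlam_pos i0) (le_ciSup (Set.finite_range lam).bddAbove i0)
  have hetalam : ∀ i, η * lam i < 1 := by
    intro i
    have h1 : η * (⨆ i, lam i) < 1 := by
      rw [lt_div_iff₀ hsup_pos] at hη'; exact hη'
    calc η * lam i ≤ η * ⨆ j, lam j :=
          mul_le_mul_of_nonneg_left (le_ciSup (Set.finite_range lam).bddAbove i) hη.le
      _ < 1 := h1
  have hetalam_pos : ∀ i, 0 < η * lam i := fun i => mul_pos hη (hlam_pos i)
  have hinv : Θ⁻¹ = cj (fun i => (lam i)⁻¹) := by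
    refine inv_eq_right_inv ?_
    rw [hΘspec, cj_mul]
    have h : lam * (fun i => (lam i)⁻¹) = 1 := by
      funext i
      simp [mul_inv_cancel₀ (hlam_pos i).ne']
    rw [h, cj_one]
  have htarget : r₀ ⬝ᵥ Θ⁻¹.mulVec r₀ = ∑ i, (lam i)⁻¹ * c i ^ 2 := by
    rw [hinv]; exact quad _
  have cj_symm : ∀ f, (cj f)ᵀ = cj f := by
    intro f
    show (U * diagonal f * star U)ᵀ = U * diagonal f * star U
    rw [transpose_mul, transpose_mul, diagonal_transpose, hstarU, transpose_transpose,
      ← hstarU, ← mul_assoc]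
  have dotJ : ∀ w : Fin n → ℝ, (Jᵀ *ᵥ w) ⬝ᵥ (Jᵀ *ᵥ w) = w ⬝ᵥ Θ *ᵥ w := by
    intro w
    rw [hΘdef, ← mulVec_mulVec, dotProduct_mulVec w, ← mulVec_transpose]
  have key : ∀ t, d t ⬝ᵥ d t
      = ∑ i, (1 - (1 - η * lam i) ^ t) ^ 2 * (lam i)⁻¹ * c i ^ 2 := by
    intro t
    set s : Fin n → ℝ := fun i => ∑ k ∈ Finset.range t, (1 - η * lam i) ^ k with hs
    have h1 : (1 : Matrix (Fin n) (Fin n) ℝ) - η • Θ = cj ((1 : Fin n → ℝ) - η • lam) := by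
      rw [← cj_sub, ← cj_smul, ← hΘspec, cj_one]
    have hS : (∑ k ∈ Finset.range t, (1 - η • Θ) ^ k) = cj s := by
      calc (∑ k ∈ Finset.range t, ((1 : Matrix (Fin n) (Fin n) ℝ) - η • Θ) ^ k)
          = ∑ k ∈ Finset.range t, cj (((1 : Fin n → ℝ) - η • lam) ^ k) := by
            refine Finset.sum_congr rfl fun k _ => ?_
            rw [h1, cj_pow]
        _ = cj (∑ k ∈ Finset.range t, ((1 : Fin n → ℝ) - η • lam) ^ k) := cj_sum t _
        _ = cj s := by
            refine congrArg cj (funext fun i => ?_)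
            simp [hs, Finset.sum_apply]
    have hdd : d t ⬝ᵥ d t
        = (η * η) * ((cj s *ᵥ r₀) ⬝ᵥ Θ *ᵥ (cj s *ᵥ r₀)) := by
      rw [hd t, hS, smul_dotProduct, dotProduct_smul, dotJ, smul_eq_mul, smul_eq_mul, mul_assoc]
    have hsymm : cj s *ᵥ r₀ = vecMul r₀ (cj s) := by
      rw [← mulVec_transpose, cj_symm]
    have hquad : (cj s *ᵥ r₀) ⬝ᵥ Θ *ᵥ (cj s *ᵥ r₀) = r₀ ⬝ᵥ (cj (s * lam * s)) *ᵥ r₀ := by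
      rw [mulVec_mulVec, ← cj_mul, ← cj_mul, ← hΘspec]
      nth_rewrite 1 [hsymm]
      rw [← dotProduct_mulVec, mulVec_mulVec, ← mul_assoc]
    rw [hdd, hquad, quad, Finset.mul_sum]
    refine Finset.sum_congr rfl fun i _ => ?_
    have geom : η * lam i * s i = 1 - (1 - η * lam i) ^ t := by
      have h := geom_sum_mul (1 - η * lam i) t
      simp only [hs]
      linear_combination -h
    have hsq : (1 - (1 - η * lam i) ^ t) ^ 2 = (η * lam i * s i) ^ 2 := by rw [geom]
    have hne := (hlam_pos i).ne'
    rw [hsq]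
    show η * η * ((s i * lam i * s i) * c i ^ 2) = _
    field_simp
  have hle : ∀ t, (∑ i, (1 - (1 - η * lam i) ^ t) ^ 2 * (lam i)⁻¹ * c i ^ 2)
      ≤ ∑ i, (lam i)⁻¹ * c i ^ 2 := by
    intro t
    refine Finset.sum_le_sum fun i _ => ?_
    have h0 : (0:ℝ) ≤ 1 - η * lam i := by linarith [hetalam i]
    have h1 : 1 - η * lam i ≤ 1 := by linarith [hetalam_pos i]
    have hp0 : (0:ℝ) ≤ (1 - η * lam i) ^ t := pow_nonneg h0 t
    have hp1 : (1 - η * lam i) ^ t ≤ 1 := pow_le_one₀ h0 h1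
    have hsq1 : (1 - (1 - η * lam i) ^ t) ^ 2 ≤ 1 := by nlinarith
    have hb : (0:ℝ) ≤ (lam i)⁻¹ * c i ^ 2 :=
      mul_nonneg (inv_nonneg.mpr (hlam_pos i).le) (sq_nonneg _)
    calc (1 - (1 - η * lam i) ^ t) ^ 2 * (lam i)⁻¹ * c i ^ 2
        = (1 - (1 - η * lam i) ^ t) ^ 2 * ((lam i)⁻¹ * c i ^ 2) := by ring
      _ ≤ 1 * ((lam i)⁻¹ * c i ^ 2) := mul_le_mul_of_nonneg_right hsq1 hb
      _ = (lam i)⁻¹ * c i ^ 2 := one_mul _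
  have htend : Tendsto (fun t => d t ⬝ᵥ d t) atTop (nhds (r₀ ⬝ᵥ Θ⁻¹.mulVec r₀)) := by
    simp only [key, htarget]
    refine tendsto_finset_sum _ fun i _ => ?_
    have h0 : (0:ℝ) ≤ 1 - η * lam i := by linarith [hetalam i]
    have h1 : 1 - η * lam i < 1 := by linarith [hetalam_pos i]
    have hx : Tendsto (fun t : ℕ => (1 - η * lam i) ^ t) atTop (nhds 0) :=
      tendsto_pow_atTop_nhds_zero_of_lt_one h0 h1
    have hsub : Tendsto (fun t : ℕ => (1 - (1 - η * lam i) ^ t) ^ 2) atTop (nhds ((1 - 0) ^ 2)) :=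
      ((tendsto_const_nhds (x := (1:ℝ))).sub hx).pow 2
    have h := (hsub.mul_const ((lam i)⁻¹)).mul_const (c i ^ 2)
    simpa using h
  constructor
  · intro t
    refine Real.sqrt_le_sqrt ?_
    rw [key t, htarget]
    exact hle t
  · exact (Real.continuous_sqrt.tendsto _).comp htend
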